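/- arXiv:2108.01772 — 2 statements merged into one kernel-verified Lean document; each statement's English description precedes it below -/
import Mathlib

section
/- Let L ∈ ℝ^{p1×r}, R ∈ ℝ^{p2×r} with X = LRᵀ of rank r and SVD X = UΣVᵀ, P1 = UᵀL, P2 = VᵀR. For ξ with matrix representation [[S, D2ᵀ],[D1, 0]] in the bases [U U⊥], [V V⊥] (an element of the tangent space T_X M_r), the solution set {(A_L, A_R) : LA_Rᵀ + A_L Rᵀ = ξ} equals {A_L = (US1 + U⊥D1)P2^{-ᵀ}, A_R = (VS2ᵀ + V⊥D2)P1^{-ᵀ} : S1, S2 ∈ ℝ^{r×r}, S1 + S2 = S}; in particular this affine solution set has dimension r². -/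
open Matrix

private lemma assoc_one {a b n : ℕ} {A : Matrix (Fin a) (Fin b) ℝ} {B : Matrix (Fin b) (Fin a) ℝ}
    (h : A * B = 1) (X : Matrix (Fin a) (Fin n) ℝ) : A * (B * X) = X := by
  rw [← Matrix.mul_assoc, h, Matrix.one_mul]

private lemma assoc_zero {a b c n : ℕ} {A : Matrix (Fin a) (Fin b) ℝ} {B : Matrix (Fin b) (Fin c) ℝ}
    (h : A * B = 0) (X : Matrix (Fin c) (Fin n) ℝ) : A * (B * X) = 0 := by
  rw [← Matrix.mul_assoc, h, Matrix.zero_mul]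

theorem stmt16 {p1 p2 r : ℕ}
    (L : Matrix (Fin p1) (Fin r) ℝ) (R : Matrix (Fin p2) (Fin r) ℝ)
    (hrank : (L * Rᵀ).rank = r)
    (U : Matrix (Fin p1) (Fin r) ℝ) (Uperp : Matrix (Fin p1) (Fin (p1 - r)) ℝ)
    (V : Matrix (Fin p2) (Fin r) ℝ) (Vperp : Matrix (Fin p2) (Fin (p2 - r)) ℝ)
    (Sg : Matrix (Fin r) (Fin r) ℝ)
    (hU : Uᵀ * U = 1) (hUperp : Uperpᵀ * Uperp = 1) (hUUp : Uᵀ * Uperp = 0)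
    (hUcomp : U * Uᵀ + Uperp * Uperpᵀ = 1)
    (hV : Vᵀ * V = 1) (hVperp : Vperpᵀ * Vperp = 1) (hVVp : Vᵀ * Vperp = 0)
    (hVcomp : V * Vᵀ + Vperp * Vperpᵀ = 1)
    (hdiag : ∀ i j, i ≠ j → Sg i j = 0) (hpos : ∀ i, 0 < Sg i i)
    (hSVD : L * Rᵀ = U * Sg * Vᵀ)
    (hP1 : IsUnit (Uᵀ * L).det) (hP2 : IsUnit (Vᵀ * R).det)
    (S : Matrix (Fin r) (Fin r) ℝ)
    (D1 : Matrix (Fin (p1 - r)) (Fin r) ℝ) (D2 : Matrix (Fin (p2 - r)) (Fin r) ℝ) :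
    {A : Matrix (Fin p1) (Fin r) ℝ × Matrix (Fin p2) (Fin r) ℝ |
        L * A.2ᵀ + A.1 * Rᵀ = U * S * Vᵀ + Uperp * D1 * Vᵀ + U * D2ᵀ * Vperpᵀ} =
      {A : Matrix (Fin p1) (Fin r) ℝ × Matrix (Fin p2) (Fin r) ℝ |
        ∃ S1 S2 : Matrix (Fin r) (Fin r) ℝ, S1 + S2 = S ∧
          A.1 = (U * S1 + Uperp * D1) * (((Vᵀ * R)⁻¹)ᵀ) ∧
          A.2 = (V * S2ᵀ + Vperp * D2) * (((Uᵀ * L)⁻¹)ᵀ)} ∧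
    Module.finrank ℝ (Submodule.span ℝ
        {d : Matrix (Fin p1) (Fin r) ℝ × Matrix (Fin p2) (Fin r) ℝ |
          ∃ A ∈ {A : Matrix (Fin p1) (Fin r) ℝ × Matrix (Fin p2) (Fin r) ℝ |
              L * A.2ᵀ + A.1 * Rᵀ = U * S * Vᵀ + Uperp * D1 * Vᵀ + U * D2ᵀ * Vperpᵀ},
          ∃ B ∈ {A : Matrix (Fin p1) (Fin r) ℝ × Matrix (Fin p2) (Fin r) ℝ |
              L * A.2ᵀ + A.1 * Rᵀ = U * S * Vᵀ + Uperp * D1 * Vᵀ + U * D2ᵀ * Vperpᵀ},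
          d = A - B}) = r ^ 2 := by
  -- basic orthogonality facts
  have hUpU : Uperpᵀ * U = 0 := by
    have := congrArg Matrix.transpose hUUp
    simpa [Matrix.transpose_mul] using this
  have hVpV : Vperpᵀ * V = 0 := by
    have := congrArg Matrix.transpose hVVp
    simpa [Matrix.transpose_mul] using this
  -- inverse facts
  have hP1i : (Uᵀ * L) * (Uᵀ * L)⁻¹ = 1 := Matrix.mul_nonsing_inv _ hP1
  have hP1i' : (Uᵀ * L)⁻¹ * (Uᵀ * L) = 1 := Matrix.nonsing_inv_mul _ hP1
  have hP2i : (Vᵀ * R) * (Vᵀ * R)⁻¹ = 1 := Matrix.mul_nonsing_inv _ hP2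
  have hP2i' : (Vᵀ * R)⁻¹ * (Vᵀ * R) = 1 := Matrix.nonsing_inv_mul _ hP2
  have hN1 : ((Uᵀ * L)⁻¹)ᵀ * (Uᵀ * L)ᵀ = 1 := by
    rw [← Matrix.transpose_mul, hP1i, Matrix.transpose_one]
  have hN1' : (Uᵀ * L)ᵀ * ((Uᵀ * L)⁻¹)ᵀ = 1 := by
    rw [← Matrix.transpose_mul, hP1i', Matrix.transpose_one]
  have hN2 : ((Vᵀ * R)⁻¹)ᵀ * (Vᵀ * R)ᵀ = 1 := by
    rw [← Matrix.transpose_mul, hP2i, Matrix.transpose_one]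
  have hN2' : (Vᵀ * R)ᵀ * ((Vᵀ * R)⁻¹)ᵀ = 1 := by
    rw [← Matrix.transpose_mul, hP2i', Matrix.transpose_one]
  -- R = V * (Vᵀ R)
  have hRVp : Rᵀ * Vperp = 0 := by
    have h1 : (Uᵀ * L) * (Rᵀ * Vperp) = 0 := by
      rw [← Matrix.mul_assoc, Matrix.mul_assoc Uᵀ L Rᵀ, Matrix.mul_assoc, hSVD]
      rw [Matrix.mul_assoc, Matrix.mul_assoc, hVVp, Matrix.mul_zero, Matrix.mul_zero,
        Matrix.mul_zero]
    have h2 : (Uᵀ * L)⁻¹ * ((Uᵀ * L) * (Rᵀ * Vperp)) = Rᵀ * Vperp := by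
      rw [← Matrix.mul_assoc, hP1i', Matrix.one_mul]
    rw [h1, Matrix.mul_zero] at h2
    exact h2.symm
  have hVpR : Vperpᵀ * R = 0 := by
    have := congrArg Matrix.transpose hRVp
    simpa [Matrix.transpose_mul] using this
  have hR : R = V * (Vᵀ * R) := by
    calc R = (V * Vᵀ + Vperp * Vperpᵀ) * R := by rw [hVcomp, Matrix.one_mul]
    _ = V * (Vᵀ * R) + Vperp * (Vperpᵀ * R) := by
        rw [Matrix.add_mul, Matrix.mul_assoc, Matrix.mul_assoc]
    _ = V * (Vᵀ * R) := by rw [hVpR, Matrix.mul_zero, add_zero]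
  -- L = U * (Uᵀ L)
  have hUpL : Uperpᵀ * L = 0 := by
    have h1 : (Uperpᵀ * L) * (Vᵀ * R)ᵀ = 0 := by
      have h0 : (Uperpᵀ * L) * (Rᵀ * V) = 0 := by
        rw [← Matrix.mul_assoc, Matrix.mul_assoc Uperpᵀ L Rᵀ, hSVD,
          ← Matrix.mul_assoc, ← Matrix.mul_assoc, hUpU, Matrix.zero_mul, Matrix.zero_mul,
          Matrix.zero_mul]
      rwa [Matrix.transpose_mul, Matrix.transpose_transpose]
    have h2 : (Uperpᵀ * L) * ((Vᵀ * R)ᵀ * ((Vᵀ * R)⁻¹)ᵀ) = 0 := by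
      rw [← Matrix.mul_assoc, h1, Matrix.zero_mul]
    rwa [hN2', Matrix.mul_one] at h2
  have hL : L = U * (Uᵀ * L) := by
    calc L = (U * Uᵀ + Uperp * Uperpᵀ) * L := by rw [hUcomp, Matrix.one_mul]
    _ = U * (Uᵀ * L) + Uperp * (Uperpᵀ * L) := by
        rw [Matrix.add_mul, Matrix.mul_assoc, Matrix.mul_assoc]
    _ = U * (Uᵀ * L) := by rw [hUpL, Matrix.mul_zero, add_zero]
  have hRT : Rᵀ = (Vᵀ * R)ᵀ * Vᵀ := by
    nth_rewrite 1 [hR]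
    exact Matrix.transpose_mul _ _
  -- Part 1: set equality
  have part1 : {A : Matrix (Fin p1) (Fin r) ℝ × Matrix (Fin p2) (Fin r) ℝ |
        L * A.2ᵀ + A.1 * Rᵀ = U * S * Vᵀ + Uperp * D1 * Vᵀ + U * D2ᵀ * Vperpᵀ} =
      {A : Matrix (Fin p1) (Fin r) ℝ × Matrix (Fin p2) (Fin r) ℝ |
        ∃ S1 S2 : Matrix (Fin r) (Fin r) ℝ, S1 + S2 = S ∧
          A.1 = (U * S1 + Uperp * D1) * (((Vᵀ * R)⁻¹)ᵀ) ∧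
          A.2 = (V * S2ᵀ + Vperp * D2) * (((Uᵀ * L)⁻¹)ᵀ)} := by
    ext ⟨A1, A2⟩
    simp only [Set.mem_setOf_eq]
    have hdecompU : ∀ {n : ℕ} (X : Matrix (Fin p1) (Fin n) ℝ),
        U * (Uᵀ * X) + Uperp * (Uperpᵀ * X) = X := by
      intro n X
      calc U * (Uᵀ * X) + Uperp * (Uperpᵀ * X)
          = (U * Uᵀ) * X + (Uperp * Uperpᵀ) * X := by
            rw [Matrix.mul_assoc, Matrix.mul_assoc]
      _ = (U * Uᵀ + Uperp * Uperpᵀ) * X := (Matrix.add_mul _ _ _).symm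
      _ = X := by rw [hUcomp, Matrix.one_mul]
    have hdecompV : ∀ {n : ℕ} (X : Matrix (Fin p2) (Fin n) ℝ),
        V * (Vᵀ * X) + Vperp * (Vperpᵀ * X) = X := by
      intro n X
      calc V * (Vᵀ * X) + Vperp * (Vperpᵀ * X)
          = (V * Vᵀ) * X + (Vperp * Vperpᵀ) * X := by
            rw [Matrix.mul_assoc, Matrix.mul_assoc]
      _ = (V * Vᵀ + Vperp * Vperpᵀ) * X := (Matrix.add_mul _ _ _).symm
      _ = X := by rw [hVcomp, Matrix.one_mul]
    constructor
    · intro heq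
      have heq' : U * ((Uᵀ * L) * A2ᵀ) + A1 * ((Vᵀ * R)ᵀ * Vᵀ)
          = U * S * Vᵀ + Uperp * D1 * Vᵀ + U * D2ᵀ * Vperpᵀ := by
        rw [← Matrix.mul_assoc, ← hL, ← hRT]
        exact heq
      have k1 := congrArg (fun M => Uᵀ * M * V) heq'
      have k2 := congrArg (fun M => Uperpᵀ * M * V) heq'
      have k3 := congrArg (fun M => Uᵀ * M * Vperp) heq'
      simp only [Matrix.mul_add, Matrix.add_mul, Matrix.mul_assoc, assoc_one hU,
        assoc_one hUperp, assoc_zero hUUp, assoc_zero hUpU, hU, hV, hUperp, hVperp,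
        hUUp, hVVp, hUpU, hVpV, Matrix.mul_one, Matrix.one_mul, Matrix.mul_zero,
        Matrix.zero_mul, add_zero, zero_add] at k1 k2 k3
      refine ⟨Uᵀ * (A1 * (Vᵀ * R)ᵀ), Uᵀ * (L * (A2ᵀ * V)), ?_, ?_, ?_⟩
      · rw [add_comm]; exact k1
      · calc A1 = (A1 * (Vᵀ * R)ᵀ) * ((Vᵀ * R)⁻¹)ᵀ := by
              rw [Matrix.mul_assoc, hN2', Matrix.mul_one]
        _ = (U * (Uᵀ * (A1 * (Vᵀ * R)ᵀ)) + Uperp * (Uperpᵀ * (A1 * (Vᵀ * R)ᵀ)))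
              * ((Vᵀ * R)⁻¹)ᵀ := by rw [hdecompU]
        _ = (U * (Uᵀ * (A1 * (Vᵀ * R)ᵀ)) + Uperp * D1) * ((Vᵀ * R)⁻¹)ᵀ := by rw [k2]
      · have e2' : Vᵀ * (A2 * (Uᵀ * L)ᵀ) = (Uᵀ * (L * (A2ᵀ * V)))ᵀ := by
          simp only [Matrix.transpose_mul, Matrix.transpose_transpose, Matrix.mul_assoc]
        have e3 : Vperpᵀ * (A2 * (Uᵀ * L)ᵀ) = D2 := by
          have h := congrArg Matrix.transpose k3
          simp only [Matrix.transpose_mul, Matrix.transpose_transpose,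
            Matrix.mul_assoc] at h
          simpa only [Matrix.transpose_mul, Matrix.transpose_transpose,
            Matrix.mul_assoc] using h
        calc A2 = (A2 * (Uᵀ * L)ᵀ) * ((Uᵀ * L)⁻¹)ᵀ := by
              rw [Matrix.mul_assoc, hN1', Matrix.mul_one]
        _ = (V * (Vᵀ * (A2 * (Uᵀ * L)ᵀ)) + Vperp * (Vperpᵀ * (A2 * (Uᵀ * L)ᵀ)))
              * ((Uᵀ * L)⁻¹)ᵀ := by rw [hdecompV]
        _ = (V * (Uᵀ * (L * (A2ᵀ * V)))ᵀ + Vperp * D2) * ((Uᵀ * L)⁻¹)ᵀ := by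
              rw [e2', e3]
    · rintro ⟨S1, S2, hsum, hA1, hA2⟩
      subst hA1 hA2 hsum
      have hPR : ((Vᵀ * R)⁻¹)ᵀ * Rᵀ = Vᵀ := by
        rw [hRT]; exact assoc_one hN2 Vᵀ
      have hLP : ∀ {n : ℕ} (X : Matrix (Fin r) (Fin n) ℝ),
          L * ((Uᵀ * L)⁻¹ * X) = U * X := by
        intro n X
        nth_rewrite 1 [hL]
        rw [Matrix.mul_assoc, assoc_one hP1i]
      simp only [Matrix.transpose_mul, Matrix.transpose_add, Matrix.transpose_transpose,
        Matrix.mul_add, Matrix.add_mul, Matrix.mul_assoc, hLP, hPR]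
      abel
  refine ⟨part1, ?_⟩
  -- the linear map parametrizing the differences of solutions
  set φ : Matrix (Fin r) (Fin r) ℝ →ₗ[ℝ]
      (Matrix (Fin p1) (Fin r) ℝ × Matrix (Fin p2) (Fin r) ℝ) :=
    { toFun := fun T => (U * T * ((Vᵀ * R)⁻¹)ᵀ, -(V * Tᵀ * ((Uᵀ * L)⁻¹)ᵀ)),
      map_add' := by
        intro T1 T2
        simp [Matrix.mul_add, Matrix.add_mul, Matrix.transpose_add, Prod.ext_iff]
        abel
      map_smul' := by
        intro c T
        simp [Matrix.mul_smul, Matrix.smul_mul, Matrix.transpose_smul, Prod.ext_iff] }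
    with hφ
  have hsetD : {d : Matrix (Fin p1) (Fin r) ℝ × Matrix (Fin p2) (Fin r) ℝ |
          ∃ A ∈ {A : Matrix (Fin p1) (Fin r) ℝ × Matrix (Fin p2) (Fin r) ℝ |
              L * A.2ᵀ + A.1 * Rᵀ = U * S * Vᵀ + Uperp * D1 * Vᵀ + U * D2ᵀ * Vperpᵀ},
          ∃ B ∈ {A : Matrix (Fin p1) (Fin r) ℝ × Matrix (Fin p2) (Fin r) ℝ |
              L * A.2ᵀ + A.1 * Rᵀ = U * S * Vᵀ + Uperp * D1 * Vᵀ + U * D2ᵀ * Vperpᵀ},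
          d = A - B} = ↑(LinearMap.range φ) := by
    ext d
    simp only [part1, Set.mem_setOf_eq, SetLike.mem_coe, LinearMap.mem_range]
    constructor
    · rintro ⟨A, ⟨S1, S2, hsum, hA1, hA2⟩, B, ⟨S1', S2', hsum', hB1, hB2⟩, rfl⟩
      refine ⟨S1 - S1', ?_⟩
      have hS2 : S2 = S2' + (S1' - S1) := by
        have h2 : S1 + S2 = S1' + S2' := hsum.trans hsum'.symm
        have h3 : S2 = (S1 + S2) - S1 := by abel
        rw [h3, h2]; abel
      have h1 : A.1 - B.1 = U * (S1 - S1') * ((Vᵀ * R)⁻¹)ᵀ := by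
        rw [hA1, hB1, ← Matrix.sub_mul]
        congr 1
        simp only [Matrix.mul_sub]
        abel
      have h2 : A.2 - B.2 = -(V * (S1 - S1')ᵀ * ((Uᵀ * L)⁻¹)ᵀ) := by
        rw [hA2, hB2, ← Matrix.sub_mul, ← Matrix.neg_mul]
        congr 1
        rw [hS2]
        simp only [Matrix.transpose_add, Matrix.transpose_sub, Matrix.mul_add,
          Matrix.mul_sub]
        abel
      rw [hφ]
      exact Prod.ext
        (by simp only [LinearMap.coe_mk, AddHom.coe_mk, Prod.fst_sub]; exact h1.symm)
        (by simp only [LinearMap.coe_mk, AddHom.coe_mk, Prod.snd_sub]; exact h2.symm)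
    · rintro ⟨T, rfl⟩
      refine ⟨((U * (S + T) + Uperp * D1) * ((Vᵀ * R)⁻¹)ᵀ,
          (V * (-T)ᵀ + Vperp * D2) * ((Uᵀ * L)⁻¹)ᵀ),
        ⟨S + T, -T, by abel, rfl, rfl⟩,
        ((U * S + Uperp * D1) * ((Vᵀ * R)⁻¹)ᵀ,
          (V * (0 : Matrix (Fin r) (Fin r) ℝ)ᵀ + Vperp * D2) * ((Uᵀ * L)⁻¹)ᵀ),
        ⟨S, 0, by abel, rfl, rfl⟩, ?_⟩
      rw [hφ]
      simp only [LinearMap.coe_mk, AddHom.coe_mk, Prod.mk_sub_mk, Prod.mk.injEq]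
      constructor
      · rw [← Matrix.sub_mul]
        congr 1
        simp only [Matrix.mul_add]
        abel
      · rw [← Matrix.sub_mul, ← Matrix.neg_mul]
        congr 1
        simp only [Matrix.transpose_neg, Matrix.transpose_zero, Matrix.mul_zero,
          Matrix.mul_neg]
        abel
  rw [hsetD, Submodule.span_eq]
  have hinj : Function.Injective φ := by
    intro T1 T2 h12
    have h1 : U * T1 * ((Vᵀ * R)⁻¹)ᵀ = U * T2 * ((Vᵀ * R)⁻¹)ᵀ := congrArg Prod.fst h12
    have key : ∀ T : Matrix (Fin r) (Fin r) ℝ,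
        Uᵀ * (U * T * ((Vᵀ * R)⁻¹)ᵀ) * (Vᵀ * R)ᵀ = T := by
      intro T
      rw [Matrix.mul_assoc U T, ← Matrix.mul_assoc Uᵀ U, hU, Matrix.one_mul,
        Matrix.mul_assoc, hN2, Matrix.mul_one]
    rw [← key T1, ← key T2, h1]
  rw [LinearMap.finrank_range_of_inj hinj, Module.finrank_matrix]
  simp [pow_two]
end

section
/- Let L ∈ ℝ^{p1×r} and R ∈ ℝ^{p2×r} have rank r, with LᵀL = RᵀR, and set X = LRᵀ. Then σ_1(L) = σ_1(R) = σ_1(X)^{1/2} and σ_r(L) = σ_r(R) = σ_r(X)^{1/2}, where σ_k denotes the k-th largest singular value. -/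
open Matrix

section Helpers
open Polynomial

lemma my_charpoly_conj {R : Type*} [CommRing R] {n : Type*} [Fintype n] [DecidableEq n]
    (P A : Matrix n n R) [Invertible P] :
    (P * A * ⅟P).charpoly = A.charpoly := by
  have h1 : C.mapMatrix P * C.mapMatrix (⅟P) = (1 : Matrix n n R[X]) := by
    rw [← _root_.map_mul, mul_invOf_self, _root_.map_one]
  have h2 : C.mapMatrix (⅟P) * C.mapMatrix P = (1 : Matrix n n R[X]) := by
    rw [← _root_.map_mul, invOf_mul_self, _root_.map_one]
  have h3 : charmatrix (P * A * ⅟P) = C.mapMatrix P * charmatrix A * C.mapMatrix (⅟P) := by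
    unfold charmatrix
    rw [Matrix.mul_sub, Matrix.sub_mul, _root_.map_mul, _root_.map_mul]
    congr 1
    rw [(scalar_commute (X : R[X]) (fun r' => Commute.all _ _) (C.mapMatrix P)).symm.eq,
      mul_assoc, h1, mul_one]
  unfold Matrix.charpoly
  rw [h3, det_mul, det_mul, mul_comm, ← mul_assoc, ← det_mul, h2, det_one, one_mul]

lemma my_charpoly_diagonal {R : Type*} [CommRing R] {n : Type*} [Fintype n] [DecidableEq n]
    (d : n → R) :
    (Matrix.diagonal d).charpoly = ∏ i, (X - C (d i)) := by
  unfold Matrix.charpoly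
  have h : charmatrix (Matrix.diagonal d) = Matrix.diagonal fun i => X - C (d i) := by
    ext i j
    rcases eq_or_ne i j with rfl | h
    · simp [charmatrix_apply_eq]
    · simp [charmatrix_apply_ne _ _ _ h, Matrix.diagonal_apply_ne _ h]
  rw [h, det_diagonal]

lemma my_charpoly_conj' {R : Type*} [CommRing R] {n : Type*} [Fintype n] [DecidableEq n]
    (P Q A : Matrix n n R) (hPQ : P * Q = 1) (hQP : Q * P = 1) :
    (P * A * Q).charpoly = A.charpoly := by
  letI : Invertible P := ⟨Q, hQP, hPQ⟩
  have hQ : ⅟P = Q := rfl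
  rw [← hQ]
  exact my_charpoly_conj P A

lemma my_roots_of_diag {n : Type*} [Fintype n] [DecidableEq n]
    {A : Matrix n n ℝ} {P Q : Matrix n n ℝ} {d : n → ℝ}
    (hPQ : P * Q = 1) (hQP : Q * P = 1) (hA : A = P * Matrix.diagonal d * Q) :
    A.charpoly.roots = Multiset.map d Finset.univ.val := by
  rw [hA, my_charpoly_conj' P Q _ hPQ hQP, my_charpoly_diagonal]
  have h : (∏ i, (X - C (d i)))
      = ((Multiset.map d Finset.univ.val).map fun a => X - C a).prod := by
    rw [Multiset.map_map]; rfl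
  rw [h, roots_multiset_prod_X_sub_C]

lemma my_roots_hermitian {n : Type*} [Fintype n] [DecidableEq n]
    {A : Matrix n n ℝ} (hA : A.IsHermitian) :
    A.charpoly.roots = Multiset.map hA.eigenvalues Finset.univ.val :=
  my_roots_of_diag (Unitary.coe_mul_star_self _) (Unitary.coe_star_mul_self _)
    (by simpa using hA.spectral_theorem)

lemma my_roots_hermitian_sq {n : Type*} [Fintype n] [DecidableEq n]
    {A : Matrix n n ℝ} (hA : A.IsHermitian) :
    (A * A).charpoly.roots = Multiset.map (fun i => hA.eigenvalues i ^ 2) Finset.univ.val := by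
  apply my_roots_of_diag (P := (hA.eigenvectorUnitary : Matrix n n ℝ))
    (Q := star (hA.eigenvectorUnitary : Matrix n n ℝ))
    (Unitary.coe_mul_star_self _) (Unitary.coe_star_mul_self _)
  conv_lhs => rw [hA.spectral_theorem, Unitary.conjStarAlgAut_apply]
  have h : (Matrix.diagonal fun i => hA.eigenvalues i ^ 2)
      = Matrix.diagonal (RCLike.ofReal ∘ hA.eigenvalues)
        * Matrix.diagonal (RCLike.ofReal ∘ hA.eigenvalues) := by
    rw [Matrix.diagonal_mul_diagonal]; congr 1; ext i; simp [sq]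
  rw [h]
  simp only [Matrix.mul_assoc]
  congr 2
  rw [← Matrix.mul_assoc (star _), Unitary.coe_star_mul_self, Matrix.one_mul]

lemma my_charpoly_mul_comm {R : Type*} [CommRing R] {m n : Type*} [Fintype m] [Fintype n]
    [DecidableEq m] [DecidableEq n] (A : Matrix m n R) (B : Matrix n m R) :
    (A * B).charpoly * X ^ (Fintype.card n) = (B * A).charpoly * X ^ (Fintype.card m) := by
  have key : (fromBlocks 1 A 0 1 : Matrix (m ⊕ n) (m ⊕ n) R) *
      (fromBlocks 0 0 B (B * A)) * (fromBlocks 1 (-A) 0 1) = fromBlocks (A * B) 0 B 0 := by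
    rw [fromBlocks_multiply, fromBlocks_multiply]
    congr 1 <;> simp [Matrix.mul_assoc]
  have hPQ : (fromBlocks 1 A 0 1 : Matrix (m ⊕ n) (m ⊕ n) R) * fromBlocks 1 (-A) 0 1 = 1 := by
    rw [fromBlocks_multiply]; simp [← fromBlocks_one]
  have hQP : (fromBlocks 1 (-A) 0 1 : Matrix (m ⊕ n) (m ⊕ n) R) * fromBlocks 1 A 0 1 = 1 := by
    rw [fromBlocks_multiply]; simp [← fromBlocks_one]
  have h1 := my_charpoly_conj' _ _ (fromBlocks 0 0 B (B * A)) hPQ hQP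
  rw [key] at h1
  have h2 : (fromBlocks (A * B) 0 B (0 : Matrix n n R)).charpoly
      = (A * B).charpoly * (0 : Matrix n n R).charpoly := charpoly_fromBlocks_zero₁₂ _ _ _
  have h3 : (fromBlocks (0 : Matrix m m R) 0 B (B * A)).charpoly
      = (0 : Matrix m m R).charpoly * (B * A).charpoly := charpoly_fromBlocks_zero₁₂ _ _ _
  have hzn : (0 : Matrix n n R).charpoly = X ^ (Fintype.card n) := by
    rw [show (0 : Matrix n n R) = Matrix.diagonal (fun _ => 0) by simp, my_charpoly_diagonal]
    simp [Finset.card_univ]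
  have hzm : (0 : Matrix m m R).charpoly = X ^ (Fintype.card m) := by
    rw [show (0 : Matrix m m R) = Matrix.diagonal (fun _ => 0) by simp, my_charpoly_diagonal]
    simp [Finset.card_univ]
  rw [h2, h3, hzn, hzm] at h1
  rw [h1]; ring

lemma my_sorted_eq {n : ℕ} {f g : Fin n → ℝ} (hf : Monotone f) (hg : Monotone g)
    (h : Multiset.map f Finset.univ.val = Multiset.map g Finset.univ.val) : f = g := by
  apply List.ofFn_injective
  apply List.Perm.eq_of_sortedLE (List.sortedLE_ofFn_iff.mpr hf)
    (List.sortedLE_ofFn_iff.mpr hg)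
  rw [Fin.univ_val_map, Fin.univ_val_map] at h
  exact Multiset.coe_eq_coe.mp h

lemma my_map_comp_perm {n : ℕ} (f : Fin n → ℝ) (σ : Equiv.Perm (Fin n)) :
    Multiset.map (f ∘ σ) Finset.univ.val = Multiset.map f Finset.univ.val := by
  rw [← Multiset.map_map]
  congr 1
  rw [← Equiv.coe_toEmbedding, ← Finset.map_val, Finset.map_univ_equiv]

noncomputable def padFun (p2 r : ℕ) (hrp2 : r ≤ p2) (s : Fin r → ℝ) : Fin p2 → ℝ :=
  fun i => if h : (i : ℕ) < p2 - r then 0 else s ⟨(i : ℕ) - (p2 - r), by omega⟩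

lemma padFun_monotone {p2 r : ℕ} (hrp2 : r ≤ p2) {s : Fin r → ℝ}
    (h0 : ∀ i, 0 ≤ s i) (hs : Monotone s) : Monotone (padFun p2 r hrp2 s) := by
  intro i j hij
  unfold padFun
  rcases lt_or_ge (i : ℕ) (p2 - r) with hi | hi
  · rcases lt_or_ge (j : ℕ) (p2 - r) with hj | hj
    · rw [dif_pos hi, dif_pos hj]
    · rw [dif_pos hi, dif_neg (by omega)]; exact h0 _
  · have hj : ¬ ((j : ℕ) < p2 - r) := by have := Fin.le_iff_val_le_val.mp hij; omega
    rw [dif_neg (by omega), dif_neg hj]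
    exact hs (by simp only [Fin.mk_le_mk]; have := Fin.le_iff_val_le_val.mp hij; omega)

lemma padFun_nonneg {p2 r : ℕ} (hrp2 : r ≤ p2) {s : Fin r → ℝ}
    (h0 : ∀ i, 0 ≤ s i) (i : Fin p2) : 0 ≤ padFun p2 r hrp2 s i := by
  unfold padFun
  split
  · exact le_refl 0
  · exact h0 _

lemma padFun_multiset {p2 r : ℕ} (hrp2 : r ≤ p2) (s : Fin r → ℝ) :
    Multiset.map (padFun p2 r hrp2 s) Finset.univ.val
      = Multiset.replicate (p2 - r) 0 + Multiset.map s Finset.univ.val := by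
  rw [Fin.univ_val_map, Fin.univ_val_map]
  have e : p2 = (p2 - r) + r := by omega
  rw [List.ofFn_congr e (padFun p2 r hrp2 s), List.ofFn_add]
  have h1 : (List.ofFn fun i : Fin (p2 - r) =>
      padFun p2 r hrp2 s (Fin.cast e.symm (Fin.castAdd r i))) = List.replicate (p2 - r) 0 := by
    rw [show (fun i : Fin (p2 - r) =>
      padFun p2 r hrp2 s (Fin.cast e.symm (Fin.castAdd r i))) = fun _ => (0:ℝ) from ?_]
    · exact List.ofFn_const _ _
    · funext i
      unfold padFun
      rw [dif_pos]
      simpa using i.isLt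
  have h2 : (List.ofFn fun j : Fin r =>
      padFun p2 r hrp2 s (Fin.cast e.symm (Fin.natAdd (p2 - r) j))) = List.ofFn s := by
    congr 1
    funext j
    unfold padFun
    rw [dif_neg (by simp)]
    congr 1
    ext
    simp
  erw [h1, h2]
  rfl

lemma my_roots_rel {p2 r : ℕ} (hrp2 : r ≤ p2) (M : Matrix (Fin p2) (Fin r) ℝ) :
    (M * Mᵀ).charpoly.roots
      = Multiset.replicate (p2 - r) 0 + (Mᵀ * M).charpoly.roots := by
  have h := my_charpoly_mul_comm M Mᵀ
  have h1 := congrArg Polynomial.roots h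
  rw [Polynomial.roots_mul (mul_ne_zero (Matrix.charpoly_monic _).ne_zero
      (pow_ne_zero _ Polynomial.X_ne_zero)),
    Polynomial.roots_mul (mul_ne_zero (Matrix.charpoly_monic _).ne_zero
      (pow_ne_zero _ Polynomial.X_ne_zero)),
    roots_X_pow, roots_X_pow, Fintype.card_fin, Fintype.card_fin,
    Multiset.nsmul_singleton, Multiset.nsmul_singleton] at h1
  have h2 : Multiset.replicate p2 (0:ℝ)
      = Multiset.replicate (p2 - r) 0 + Multiset.replicate r 0 := by
    rw [← Multiset.replicate_add]; congr 1; omega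
  rw [h2, ← add_assoc] at h1
  rw [add_comm (Multiset.replicate (p2 - r) (0:ℝ))]
  exact add_right_cancel h1

end Helpers

/-- The `k`-th largest eigenvalue (0-indexed: `k = 0` is the largest) of a
Hermitian (real symmetric) matrix. -/
noncomputable def eigval {n : ℕ} (A : Matrix (Fin n) (Fin n) ℝ) (hA : A.IsHermitian)
    (k : Fin n) : ℝ :=
  (hA.eigenvalues ∘ Tuple.sort hA.eigenvalues) k.rev

/-- The `k`-th largest singular value (0-indexed) of a real matrix `M`,
defined as the square root of the `k`-th largest eigenvalue of `Mᵀ * M`. -/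
noncomputable def singval {m n : ℕ} (M : Matrix (Fin m) (Fin n) ℝ) (k : Fin n) : ℝ :=
  Real.sqrt (eigval (Mᵀ * M)
    (by simpa [Matrix.conjTranspose_eq_transpose_of_trivial] using
      Matrix.isHermitian_conjTranspose_mul_self M) k)

lemma eigval_congr {n : ℕ} {A B : Matrix (Fin n) (Fin n) ℝ} (h : A = B)
    (hA : A.IsHermitian) (hB : B.IsHermitian) (k : Fin n) :
    eigval A hA k = eigval B hB k := by subst h; rfl

lemma rev_zero_fin {n : ℕ} (h : 0 < n) : (⟨0, h⟩ : Fin n).rev = ⟨n - 1, by omega⟩ := by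
  rw [Fin.ext_iff, Fin.val_rev]

lemma rev_last_fin {n : ℕ} (h : 0 < n) : (⟨n - 1, by omega⟩ : Fin n).rev = ⟨0, h⟩ := by
  rw [Fin.ext_iff, Fin.val_rev]; simp; omega

lemma rev_rm1_fin {p2 r : ℕ} (hr : 0 < r) (hrp2 : r ≤ p2) :
    (⟨r - 1, by omega⟩ : Fin p2).rev = ⟨p2 - r, by omega⟩ := by
  rw [Fin.ext_iff, Fin.val_rev]; simp; omega

lemma padFun_last {p2 r : ℕ} (hr : 0 < r) (hrp2 : r ≤ p2) (s : Fin r → ℝ) :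
    padFun p2 r hrp2 s ⟨p2 - 1, by omega⟩ = s ⟨r - 1, by omega⟩ := by
  unfold padFun
  rw [dif_neg (by simp; omega)]
  congr 1
  rw [Fin.ext_iff]
  simp
  omega

lemma padFun_mid {p2 r : ℕ} (hr : 0 < r) (hrp2 : r ≤ p2) (s : Fin r → ℝ) :
    padFun p2 r hrp2 s ⟨p2 - r, by omega⟩ = s ⟨0, hr⟩ := by
  unfold padFun
  rw [dif_neg (by simp)]
  congr 1
  rw [Fin.ext_iff]
  simp

theorem stmt17 {p1 p2 r : ℕ} (hr : 0 < r) (hrp2 : r ≤ p2)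
    (L : Matrix (Fin p1) (Fin r) ℝ) (R : Matrix (Fin p2) (Fin r) ℝ)
    (hL : L.rank = r) (hR : R.rank = r)
    (hbal : Lᵀ * L = Rᵀ * R)
    (hXrank : (L * Rᵀ).rank = r) :
    singval L ⟨0, hr⟩ = singval R ⟨0, hr⟩ ∧
    singval L ⟨0, hr⟩ = Real.sqrt (singval (L * Rᵀ) ⟨0, by omega⟩) ∧
    singval L ⟨r - 1, by omega⟩ = singval R ⟨r - 1, by omega⟩ ∧
    singval L ⟨r - 1, by omega⟩ =
      Real.sqrt (singval (L * Rᵀ) ⟨r - 1, by omega⟩) := by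
  have hH : (Rᵀ * R).IsHermitian := by
    simpa [Matrix.conjTranspose_eq_transpose_of_trivial] using
      Matrix.isHermitian_conjTranspose_mul_self R
  have hB : (R * Rᵀ).IsHermitian := by
    simpa [Matrix.conjTranspose_eq_transpose_of_trivial] using
      Matrix.isHermitian_mul_conjTranspose_self R
  set s : Fin r → ℝ := hH.eigenvalues ∘ Tuple.sort hH.eigenvalues with hs_def
  set t : Fin p2 → ℝ := hB.eigenvalues ∘ Tuple.sort hB.eigenvalues with ht_def
  have hsmono : Monotone s := Tuple.monotone_sort _
  have htmono : Monotone t := Tuple.monotone_sort _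
  have hpsd : (Rᵀ * R).PosSemidef := by
    simpa [Matrix.conjTranspose_eq_transpose_of_trivial] using
      Matrix.posSemidef_conjTranspose_mul_self R
  have hs0 : ∀ i, 0 ≤ s i := fun i => hpsd.eigenvalues_nonneg _
  -- key: singval of L/R in terms of s
  have keyL : ∀ k : Fin r, singval L k = Real.sqrt (s k.rev) := by
    intro k
    simp only [singval]
    rw [eigval_congr hbal _ hH]
    rfl
  have keyR : ∀ k : Fin r, singval R k = Real.sqrt (s k.rev) := fun k => rfl
  -- t = padded s
  have hmap_s : Multiset.map s Finset.univ.val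
      = Multiset.map hH.eigenvalues Finset.univ.val := my_map_comp_perm _ _
  have hmap_t : Multiset.map t Finset.univ.val
      = Multiset.map hB.eigenvalues Finset.univ.val := my_map_comp_perm _ _
  have ht_pad : t = padFun p2 r hrp2 s := by
    apply my_sorted_eq htmono (padFun_monotone hrp2 hs0 hsmono)
    rw [hmap_t, ← my_roots_hermitian hB, my_roots_rel hrp2 R, my_roots_hermitian hH,
      ← hmap_s, padFun_multiset]
  have ht0 : ∀ i, 0 ≤ t i := by
    rw [ht_pad]; exact padFun_nonneg hrp2 hs0
  -- hermitianity of (R*Rᵀ)*(R*Rᵀ)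
  have hB2 : ((R * Rᵀ) * (R * Rᵀ)).IsHermitian := by
    unfold Matrix.IsHermitian
    rw [conjTranspose_mul, hB.eq]
  have hXX : (L * Rᵀ)ᵀ * (L * Rᵀ) = (R * Rᵀ) * (R * Rᵀ) := by
    calc (L * Rᵀ)ᵀ * (L * Rᵀ) = R * ((Lᵀ * L) * Rᵀ) := by
          rw [transpose_mul, transpose_transpose]; simp only [Matrix.mul_assoc]
      _ = R * ((Rᵀ * R) * Rᵀ) := by rw [hbal]
      _ = (R * Rᵀ) * (R * Rᵀ) := by simp only [Matrix.mul_assoc]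
  have hu : (hB2.eigenvalues ∘ Tuple.sort hB2.eigenvalues) = fun i => t i ^ 2 := by
    apply my_sorted_eq (Tuple.monotone_sort _)
    · intro i j hij
      exact pow_le_pow_left₀ (ht0 i) (htmono hij) 2
    · rw [my_map_comp_perm, ← my_roots_hermitian hB2, my_roots_hermitian_sq hB,
        show (fun i => hB.eigenvalues i ^ 2) = (fun x : ℝ => x ^ 2) ∘ hB.eigenvalues from rfl,
        show (fun i => t i ^ 2) = (fun x : ℝ => x ^ 2) ∘ t from rfl,
        ← Multiset.map_map (fun x : ℝ => x ^ 2) hB.eigenvalues, ← hmap_t,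
        Multiset.map_map]
  have keyX : ∀ k : Fin p2, singval (L * Rᵀ) k = t k.rev := by
    intro k
    simp only [singval]
    rw [eigval_congr hXX _ hB2]
    show Real.sqrt ((hB2.eigenvalues ∘ Tuple.sort hB2.eigenvalues) k.rev) = _
    rw [hu]
    exact Real.sqrt_sq (ht0 _)
  refine ⟨by rw [keyL, keyR], ?_, by rw [keyL, keyR], ?_⟩
  · rw [keyL, keyX, ht_pad, rev_zero_fin hr, rev_zero_fin (show 0 < p2 by omega),
      padFun_last hr hrp2]
  · rw [keyL, keyX, ht_pad, rev_last_fin hr, rev_rm1_fin hr hrp2, padFun_mid hr hrp2]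
end
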